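/- arXiv:2003.10034 — 3 statements merged into one kernel-verified Lean document; each statement's English description precedes it below -/
import Mathlib

section
/- Let T be the infinite rooted k-ary tree with k ≥ 2, w : T → [0,∞) a weight, s > 1, s' = s/(s−1), and M_s° w = (M°(w^s))^{1/s} where M° is the spherical maximal operator. For all finite subsets E, F ⊆ T and every integer r ≥ 0, the quantity Σ_{x∈E} w(F ∩ S(x,r)) is at most c_s · k^{r s'/(s'+1)} · w(F)^{1/(s'+1)} · (M_s°w(E))^{s'/(s'+1)}, where c_s depends only on s and w(A) = Σ_{y∈A} w(y), M_s°w(E) = Σ_{x∈E} M_s°w(x). -/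
open scoped ENNReal NNReal BigOperators

noncomputable section

/-- Vertices of the infinite rooted `k`-ary tree: finite words over `Fin k`. -/
abbrev V (k : ℕ) := List (Fin k)

/-- Length of the longest common prefix (depth of the deepest common ancestor). -/
def lcpLen {k : ℕ} : List (Fin k) → List (Fin k) → ℕ
  | a :: as, b :: bs => if a = b then lcpLen as bs + 1 else 0
  | _, _ => 0

/-- Graph distance on the infinite rooted `k`-ary tree. -/
def tdist {k : ℕ} (x y : V k) : ℕ :=
  (x.length - lcpLen x y) + (y.length - lcpLen x y)

/-- Sphere of radius `r` centered at `x`. -/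
def sph {k : ℕ} (x : V k) (r : ℕ) : Set (V k) := {y | tdist x y = r}

/-- Closed ball of radius `r` centered at `x`. -/
def ball {k : ℕ} (x : V k) (r : ℕ) : Set (V k) := {y | tdist x y ≤ r}

def sphCard {k : ℕ} (x : V k) (r : ℕ) : ℝ≥0∞ := ((sph x r).ncard : ℝ≥0∞)
def ballCard {k : ℕ} (x : V k) (r : ℕ) : ℝ≥0∞ := ((ball x r).ncard : ℝ≥0∞)

/-- `w(A) = Σ_{y ∈ A} w(y)`, the weighted (counting) measure of `A`. -/
def wsum {k : ℕ} (w : V k → ℝ≥0∞) (A : Set (V k)) : ℝ≥0∞ := ∑' y : A, w ↑y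

/-- Spherical average `A_r° f (x)`. -/
def sphAvg {k : ℕ} (f : V k → ℝ≥0∞) (x : V k) (r : ℕ) : ℝ≥0∞ :=
  wsum f (sph x r) / sphCard x r

/-- Spherical maximal operator `M°`. -/
def Msph {k : ℕ} (f : V k → ℝ≥0∞) (x : V k) : ℝ≥0∞ := ⨆ r : ℕ, sphAvg f x r

/-- Centered Hardy–Littlewood maximal operator `M`. -/
def Mball {k : ℕ} (f : V k → ℝ≥0∞) (x : V k) : ℝ≥0∞ :=
  ⨆ r : ℕ, wsum f (ball x r) / ballCard x r

/-- `|f|` of a real-valued function, as an `ℝ≥0∞`-valued function. -/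
def absE {k : ℕ} (f : V k → ℝ) : V k → ℝ≥0∞ := fun y => ENNReal.ofReal |f y|

/-- `M_s w = (M(w^s))^{1/s}` (centered version). -/
def MsBall {k : ℕ} (s : ℝ) (w : V k → ℝ≥0∞) (x : V k) : ℝ≥0∞ :=
  (Mball (fun y => w y ^ s) x) ^ (1 / s)

/-- `M_s° w = (M°(w^s))^{1/s}` (spherical version). -/
def MsSph {k : ℕ} (s : ℝ) (w : V k → ℝ≥0∞) (x : V k) : ℝ≥0∞ :=
  (Msph (fun y => w y ^ s) x) ^ (1 / s)


/-!
Split the sphere `S(x, r)` according to the number `a` of edges its geodesics from `x` climb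
before descending. A point of `F` lies in the `a`-th piece of at most `k^a` spheres centred in `E`,
so that piece contributes at most `k^a w(F)`; on the other hand a piece has at most `k^(r-a)`
points and `|S(x, r)| ≤ 2 k^r`, so Hölder bounds its contribution by
`2^(1/s) k^(r - a/s') M_s°w(E)`. The first bound grows and the second decays geometrically in `a`,
so the sum over `a` of their minima is controlled by their value where they cross, which is
their weighted geometric mean with weights `1/(s'+1)` and `s'/(s'+1)`.
-/

namespace ENNReal

variable {ρ ρ₁ ρ₂ P : ℝ≥0∞}

lemma sum_le_of_le_pow_mul {ι : Type*} {J : Finset ι} {f : ι → ℝ≥0∞} {g : ι → ℕ}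
    (hg : Set.InjOn g J) (hf : ∀ i ∈ J, f i ≤ ρ ^ g i * P) :
    ∑ i ∈ J, f i ≤ (1 - ρ)⁻¹ * P :=
  calc ∑ i ∈ J, f i ≤ ∑ i ∈ J, ρ ^ g i * P := Finset.sum_le_sum hf
    _ = ∑ j ∈ J.image g, ρ ^ j * P := (Finset.sum_image (f := fun j => ρ ^ j * P) hg).symm
    _ ≤ ∑' j, ρ ^ j * P := ENNReal.sum_le_tsum _
    _ = (1 - ρ)⁻¹ * P := by rw [ENNReal.tsum_mul_right, ENNReal.tsum_geometric]

lemma le_pow_mul_of_le_mul_succ {U : ℕ → ℝ≥0∞} (hU : ∀ a, U a ≤ ρ * U (a + 1)) (a n : ℕ) :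
    U a ≤ ρ ^ n * U (a + n) := by
  induction n with
  | zero => simp
  | succ n ih =>
    calc U a ≤ ρ ^ n * U (a + n) := ih
      _ ≤ ρ ^ n * (ρ * U (a + n + 1)) := by gcongr; exact hU _
      _ = ρ ^ (n + 1) * U (a + (n + 1)) := by ring_nf

lemma le_pow_mul_of_succ_le_mul {V : ℕ → ℝ≥0∞} (hV : ∀ a, V (a + 1) ≤ ρ * V a) (a n : ℕ) :
    V (a + n) ≤ ρ ^ n * V a := by
  induction n with
  | zero => simp
  | succ n ih =>
    calc V (a + (n + 1)) ≤ ρ * V (a + n) := hV _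
      _ ≤ ρ * (ρ ^ n * V a) := by gcongr
      _ = ρ ^ (n + 1) * V a := by ring

lemma sum_le_of_le_mul_succ {U : ℕ → ℝ≥0∞} (hU : ∀ a, U a ≤ ρ * U (a + 1)) {J : Finset ℕ}
    (hP : ∀ a ∈ J, U a ≤ P) : ∑ a ∈ J, U a ≤ (1 - ρ)⁻¹ * P := by
  rcases J.eq_empty_or_nonempty with rfl | hJ
  · simp
  set m := J.max' hJ
  refine sum_le_of_le_pow_mul (g := (m - ·)) ?_ fun a ha => ?_
  · intro a ha b hb hab
    have := J.le_max' a ha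
    have := J.le_max' b hb
    simp only at hab
    omega
  · calc U a ≤ ρ ^ (m - a) * U (a + (m - a)) := le_pow_mul_of_le_mul_succ hU _ _
      _ ≤ ρ ^ (m - a) * P := by
        rw [Nat.add_sub_cancel' (J.le_max' a ha)]
        exact mul_le_mul_right (hP _ (J.max'_mem hJ)) _

lemma sum_le_of_succ_le_mul {V : ℕ → ℝ≥0∞} (hV : ∀ a, V (a + 1) ≤ ρ * V a) {J : Finset ℕ}
    (hP : ∀ a ∈ J, V a ≤ P) : ∑ a ∈ J, V a ≤ (1 - ρ)⁻¹ * P := by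
  rcases J.eq_empty_or_nonempty with rfl | hJ
  · simp
  set m := J.min' hJ
  refine sum_le_of_le_pow_mul (g := (· - m)) ?_ fun a ha => ?_
  · intro a ha b hb hab
    have := J.min'_le a ha
    have := J.min'_le b hb
    simp only at hab
    omega
  · calc V a = V (m + (a - m)) := by rw [Nat.add_sub_cancel' (J.min'_le a ha)]
      _ ≤ ρ ^ (a - m) * V m := le_pow_mul_of_succ_le_mul hV _ _
      _ ≤ ρ ^ (a - m) * P := mul_le_mul_right (hP _ (J.min'_mem hJ)) _

/-- Where `U ≤ V`, the terms `U a` are dominated by a geometric series ending at the last such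
index, where `U ≤ P`; symmetrically for `V`. -/
lemma sum_min_le_of_geometric {U V : ℕ → ℝ≥0∞} (hU : ∀ a, U a ≤ ρ₁ * U (a + 1))
    (hV : ∀ a, V (a + 1) ≤ ρ₂ * V a) (hP : ∀ a, min (U a) (V a) ≤ P) (J : Finset ℕ) :
    ∑ a ∈ J, min (U a) (V a) ≤ ((1 - ρ₁)⁻¹ + (1 - ρ₂)⁻¹) * P := by
  rw [← Finset.sum_filter_add_sum_filter_not J (fun a => U a ≤ V a), add_mul]
  gcongr
  · rw [Finset.sum_congr rfl fun a ha => min_eq_left (Finset.mem_filter.1 ha).2]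
    exact sum_le_of_le_mul_succ hU fun a ha => min_eq_left (Finset.mem_filter.1 ha).2 ▸ hP a
  · rw [Finset.sum_congr rfl fun a ha => min_eq_right (le_of_not_ge (Finset.mem_filter.1 ha).2)]
    exact sum_le_of_succ_le_mul hV fun a ha =>
      min_eq_right (le_of_not_ge (Finset.mem_filter.1 ha).2) ▸ hP a

lemma min_le_rpow_mul_rpow (x y : ℝ≥0∞) {θ t : ℝ} (hθ : 0 ≤ θ) (ht : 0 ≤ t) (h : θ + t = 1) :
    min x y ≤ x ^ θ * y ^ t :=
  calc min x y = min x y ^ θ * min x y ^ t := by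
        rw [← rpow_add_of_nonneg _ _ hθ ht, h, rpow_one]
    _ ≤ x ^ θ * y ^ t := by gcongr <;> simp

end ENNReal

open ENNReal in
/-- The exponents `1/(q+1)` and `q/(q+1)` are chosen so that the weighted geometric mean of the
two competing terms does not depend on `a`. -/
lemma sum_min_pow_mul_le {K : ℝ≥0∞} (hK : 2 ≤ K) (hK' : K ≠ ⊤) {q : ℝ} (hq : 0 < q)
    (c W M : ℝ≥0∞) (r : ℝ) (J : Finset ℕ) :
    ∑ a ∈ J, min (K ^ a * W) (c * K ^ (r - a / q) * M) ≤
      ((1 - 2⁻¹)⁻¹ + (1 - 2 ^ (-(1 / q)))⁻¹) *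
        (c ^ (q / (q + 1)) * K ^ (r * (q / (q + 1))) * W ^ (1 / (q + 1)) * M ^ (q / (q + 1))) := by
  have hK0 : K ≠ 0 := (lt_of_lt_of_le two_pos hK).ne'
  have hθ : (0 : ℝ) ≤ 1 / (q + 1) := by positivity
  have ht : (0 : ℝ) ≤ q / (q + 1) := by positivity
  refine sum_min_le_of_geometric (fun a => ?_) (fun a => ?_) (fun a => ?_) J
  · calc K ^ a * W = 2⁻¹ * (2 * (K ^ a * W)) := by
          rw [← mul_assoc, ENNReal.inv_mul_cancel two_ne_zero ofNat_ne_top, one_mul]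
      _ ≤ 2⁻¹ * (K ^ (a + 1) * W) := by
          rw [pow_succ', mul_assoc]
          gcongr
  · have hstep : r - (a + 1 : ℕ) / q = (r - a / q) + -(1 / q) := by push_cast; ring
    calc c * K ^ (r - (a + 1 : ℕ) / q) * M = K ^ (-(1 / q)) * (c * K ^ (r - a / q) * M) := by
          rw [hstep, rpow_add _ _ hK0 hK']
          ring
      _ ≤ 2 ^ (-(1 / q)) * (c * K ^ (r - a / q) * M) := by
          rw [rpow_neg, rpow_neg]
          gcongr
  · refine (min_le_rpow_mul_rpow _ _ hθ ht (by field_simp; ring)).trans_eq ?_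
    have hexp : (a : ℝ) * (1 / (q + 1)) + (r - a / q) * (q / (q + 1)) = r * (q / (q + 1)) := by
      field_simp
      ring
    rw [mul_rpow_of_nonneg _ _ hθ, mul_rpow_of_nonneg _ _ ht, mul_rpow_of_nonneg _ _ ht,
      ← rpow_natCast, ← rpow_mul, ← rpow_mul, ← hexp, rpow_add _ _ hK0 hK']
    ring

section Extensions

variable {α : Type*} [Fintype α] [DecidableEq α]

def extensions (u : List α) (m : ℕ) : Finset (List α) :=
  Finset.univ.image fun v : List.Vector α m => u ++ v.toList

lemma mem_extensions {u y : List α} {m : ℕ} :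
    y ∈ extensions u m ↔ u <+: y ∧ y.length = u.length + m := by
  constructor
  · rintro hy
    obtain ⟨v, -, rfl⟩ := Finset.mem_image.1 hy
    exact ⟨List.prefix_append _ _, by simp⟩
  · rintro ⟨⟨t, rfl⟩, hlen⟩
    exact Finset.mem_image.2 ⟨⟨t, by simpa using hlen⟩, Finset.mem_univ _, rfl⟩

lemma card_extensions_le (u : List α) (m : ℕ) :
    (extensions u m).card ≤ Fintype.card α ^ m :=
  Finset.card_image_le.trans_eq (by rw [Finset.card_univ, card_vector])

end Extensions

section KaryTree

open scoped Classical

variable {k : ℕ}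

lemma lcpLen_le_length_left : ∀ x y : V k, lcpLen x y ≤ x.length
  | [], _ | _ :: _, [] => by simp [lcpLen]
  | a :: as, b :: bs => by
      rw [lcpLen]
      split_ifs
      · simpa using lcpLen_le_length_left as bs
      · exact Nat.zero_le _

lemma lcpLen_le_length_right : ∀ x y : V k, lcpLen x y ≤ y.length
  | [], _ | _ :: _, [] => by simp [lcpLen]
  | a :: as, b :: bs => by
      rw [lcpLen]
      split_ifs
      · simpa using lcpLen_le_length_right as bs
      · exact Nat.zero_le _

lemma take_lcpLen_eq : ∀ x y : V k, x.take (lcpLen x y) = y.take (lcpLen x y)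
  | [], _ | _ :: _, [] => by simp [lcpLen]
  | a :: as, b :: bs => by
      rw [lcpLen]
      split_ifs with h
      · rw [h, List.take_succ_cons, List.take_succ_cons, take_lcpLen_eq as bs]
      · rfl

lemma lcpLen_append_right : ∀ x z : V k, lcpLen x (x ++ z) = x.length
  | [], z => by cases z <;> rfl
  | a :: as, z => by simp [lcpLen, lcpLen_append_right as z]

/-- The part of `sph x (a + b)` whose geodesic from `x` climbs `a` edges towards the root and then
descends `b` edges. -/
def sphPiece (x : V k) (a b : ℕ) : Set (V k) :=
  {y | lcpLen x y + a = x.length ∧ lcpLen x y + b = y.length}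

lemma sphPiece_subset_sph (x : V k) (a b : ℕ) : sphPiece x a b ⊆ sph x (a + b) := by
  rintro y ⟨hx, hy⟩
  simp only [sph, tdist, Set.mem_ofPred_eq]
  omega

lemma mem_sphPiece_of_mem_sph {x y : V k} {r : ℕ} (hy : y ∈ sph x r) :
    x.length - lcpLen x y ≤ r ∧
      y ∈ sphPiece x (x.length - lcpLen x y) (r - (x.length - lcpLen x y)) := by
  have := lcpLen_le_length_left x y
  have := lcpLen_le_length_right x y
  simp only [sph, tdist, Set.mem_ofPred_eq] at hy
  exact ⟨by omega, by omega, by omega⟩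

lemma sphPiece_subset_extensions (x : V k) (a b : ℕ) :
    sphPiece x a b ⊆ ↑(extensions (x.take (x.length - a)) b) := by
  rintro y ⟨hx, hy⟩
  have hc : x.length - a = lcpLen x y := by omega
  rw [Finset.mem_coe, mem_extensions, hc, take_lcpLen_eq]
  exact ⟨List.take_prefix _ _, by simp; omega⟩

lemma setOf_mem_sphPiece_subset_extensions (y : V k) (a b : ℕ) :
    {x | y ∈ sphPiece x a b} ⊆ ↑(extensions (y.take (y.length - b)) a) := by
  rintro x ⟨hx, hy⟩
  have hc : y.length - b = lcpLen x y := by omega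
  rw [Finset.mem_coe, mem_extensions, hc, ← take_lcpLen_eq]
  exact ⟨List.take_prefix _ _, by simp; omega⟩

lemma card_filter_le_pow_of_subset_extensions {S : Set (V k)} {u : V k} {m : ℕ}
    (hS : S ⊆ ↑(extensions u m)) (G : Finset (V k)) :
    ((G.filter (· ∈ S)).card : ℝ≥0∞) ≤ (k : ℝ≥0∞) ^ m := by
  have hcard : (G.filter (· ∈ S)).card ≤ k ^ m :=
    calc (G.filter (· ∈ S)).card ≤ (extensions u m).card :=
          Finset.card_le_card fun y hy => hS (Finset.mem_filter.1 hy).2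
      _ ≤ k ^ m := by simpa using card_extensions_le u m
  exact_mod_cast hcard

lemma sph_subset_biUnion_extensions (x : V k) (r : ℕ) :
    sph x r ⊆
      ↑((Finset.range (r + 1)).biUnion fun a => extensions (x.take (x.length - a)) (r - a)) := by
  intro y hy
  obtain ⟨har, hpiece⟩ := mem_sphPiece_of_mem_sph hy
  exact Finset.mem_biUnion.2
    ⟨_, Finset.mem_range.2 (Nat.lt_succ_of_le har), sphPiece_subset_extensions _ _ _ hpiece⟩

lemma ncard_sph_le (hk : 2 ≤ k) (x : V k) (r : ℕ) : (sph x r).ncard ≤ 2 * k ^ r :=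
  calc (sph x r).ncard
      ≤ ((Finset.range (r + 1)).biUnion fun a => extensions (x.take (x.length - a)) (r - a)).card :=
        (Set.ncard_le_ncard (sph_subset_biUnion_extensions x r) (Finset.finite_toSet _)).trans_eq
          (Set.ncard_coe_finset _)
    _ ≤ ∑ a ∈ Finset.range (r + 1), k ^ (r - a) :=
        Finset.card_biUnion_le.trans
          (Finset.sum_le_sum fun a _ => by
            simpa using card_extensions_le (x.take (x.length - a)) (r - a))
    _ = ∑ i ∈ Finset.range (r + 1), k ^ i := by
        simpa using Finset.sum_range_reflect (fun i => k ^ i) (r + 1)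
    _ ≤ 2 * k ^ r := by
        rw [Finset.sum_range_succ, two_mul]
        exact Nat.add_le_add_right (Nat.geomSum_lt hk fun i hi => Finset.mem_range.1 hi).le _

lemma sph_nonempty (hk : 0 < k) (x : V k) (r : ℕ) : (sph x r).Nonempty :=
  ⟨x ++ List.replicate r ⟨0, hk⟩, by simp [sph, tdist, lcpLen_append_right]⟩

lemma wsum_sph_le (hk : 2 ≤ k) (f : V k → ℝ≥0∞) (x : V k) (r : ℕ) :
    wsum f (sph x r) ≤ 2 * (k : ℝ≥0∞) ^ r * Msph f x := by
  have hcard_pos : sphCard x r ≠ 0 := by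
    simpa [sphCard] using ((Set.ncard_pos ((Finset.finite_toSet _).subset
      (sph_subset_biUnion_extensions x r))).2 (sph_nonempty (by omega) x r)).ne'
  have hcard_le : sphCard x r ≤ 2 * (k : ℝ≥0∞) ^ r := by
    simpa [sphCard] using (Nat.cast_le (α := ℝ≥0∞)).2 (ncard_sph_le hk x r)
  calc wsum f (sph x r) = sphCard x r * sphAvg f x r :=
        (ENNReal.mul_div_cancel hcard_pos (ENNReal.natCast_ne_top _)).symm
    _ ≤ 2 * (k : ℝ≥0∞) ^ r * Msph f x := mul_le_mul' hcard_le (le_iSup (sphAvg f x) r)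

lemma wsum_coe_finset (f : V k → ℝ≥0∞) (G : Finset (V k)) : wsum f ↑G = ∑ y ∈ G, f y :=
  G.tsum_subtype' f

lemma wsum_inter_eq_sum_filter (f : V k → ℝ≥0∞) (G : Finset (V k)) (S : Set (V k)) :
    wsum f (↑G ∩ S) = ∑ y ∈ G with y ∈ S, f y := by
  rw [← wsum_coe_finset, Finset.coe_filter]
  rfl

lemma sum_sum_sphPiece_le (w : V k → ℝ≥0∞) (E F : Finset (V k)) (a b : ℕ) :
    ∑ x ∈ E, ∑ y ∈ F with y ∈ sphPiece x a b, w y ≤ (k : ℝ≥0∞) ^ a * wsum w ↑F := by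
  calc ∑ x ∈ E, ∑ y ∈ F with y ∈ sphPiece x a b, w y
      = ∑ y ∈ F, ((E.filter fun x => y ∈ sphPiece x a b).card : ℝ≥0∞) * w y := by
        simp_rw [Finset.sum_filter]
        rw [Finset.sum_comm]
        simp_rw [← Finset.sum_filter, Finset.sum_const, nsmul_eq_mul]
    _ ≤ ∑ y ∈ F, (k : ℝ≥0∞) ^ a * w y := by
        gcongr with y
        exact card_filter_le_pow_of_subset_extensions
          (setOf_mem_sphPiece_subset_extensions y a b) E
    _ = (k : ℝ≥0∞) ^ a * wsum w ↑F := by rw [← Finset.mul_sum, wsum_coe_finset]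

lemma sum_sphPiece_le_MsSph {p q : ℝ} (hpq : p.HolderConjugate q) (hk : 2 ≤ k)
    (w : V k → ℝ≥0∞) (x : V k) (F : Finset (V k)) {a b r : ℕ} (hab : a + b = r) :
    ∑ y ∈ F with y ∈ sphPiece x a b, w y ≤
      2 ^ (1 / p) * (k : ℝ≥0∞) ^ ((r : ℝ) - a / q) * MsSph p w x := by
  set G := F.filter (· ∈ sphPiece x a b)
  have hholder : ∑ y ∈ G, w y ≤ (G.card : ℝ≥0∞) ^ (1 / q) * (∑ y ∈ G, w y ^ p) ^ (1 / p) := by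
    simpa using ENNReal.inner_le_Lp_mul_Lq G 1 w hpq.symm
  have hcard : (G.card : ℝ≥0∞) ≤ (k : ℝ≥0∞) ^ b :=
    card_filter_le_pow_of_subset_extensions (sphPiece_subset_extensions x a b) F
  have hsph : ∑ y ∈ G, w y ^ p ≤ 2 * (k : ℝ≥0∞) ^ r * Msph (fun y => w y ^ p) x := by
    rw [← wsum_coe_finset]
    refine (ENNReal.tsum_mono_subtype _ fun y hy => ?_).trans (wsum_sph_le hk _ x r)
    exact hab ▸ sphPiece_subset_sph x a b (Finset.mem_filter.1 hy).2
  have hexp : (b : ℝ) * (1 / q) + r * (1 / p) = r - a / q := by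
    rw [one_div, one_div, ← hpq.symm.one_sub_inv, ← hab]
    push_cast
    ring
  have hk0 : (k : ℝ≥0∞) ≠ 0 := by simp; omega
  have hp : (0 : ℝ) ≤ 1 / p := one_div_nonneg.2 hpq.nonneg
  calc ∑ y ∈ G, w y
      ≤ ((k : ℝ≥0∞) ^ b) ^ (1 / q) * (2 * (k : ℝ≥0∞) ^ r * Msph (fun y => w y ^ p) x) ^ (1 / p) :=
        hholder.trans (by gcongr; exact one_div_nonneg.2 hpq.symm.nonneg)
    _ = 2 ^ (1 / p) * (k : ℝ≥0∞) ^ ((r : ℝ) - a / q) * MsSph p w x := by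
        rw [MsSph, ENNReal.mul_rpow_of_nonneg _ _ hp, ENNReal.mul_rpow_of_nonneg _ _ hp,
          ← ENNReal.rpow_natCast, ← ENNReal.rpow_natCast, ← ENNReal.rpow_mul, ← ENNReal.rpow_mul,
          ← hexp, ENNReal.rpow_add _ _ hk0 (ENNReal.natCast_ne_top k)]
        ring

lemma wsum_inter_sph_le (w : V k → ℝ≥0∞) (F : Finset (V k)) (x : V k) (r : ℕ) :
    wsum w (↑F ∩ sph x r) ≤
      ∑ a ∈ Finset.range (r + 1), ∑ y ∈ F with y ∈ sphPiece x a (r - a), w y := by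
  rw [wsum_inter_eq_sum_filter, ← Finset.sum_fiberwise_of_maps_to (t := Finset.range (r + 1))
    (g := fun y => x.length - lcpLen x y)
    fun y hy => Finset.mem_range_succ_iff.2 (mem_sphPiece_of_mem_sph (Finset.mem_filter.1 hy).2).1]
  refine Finset.sum_le_sum fun a _ => Finset.sum_le_sum_of_subset fun y hy => ?_
  obtain ⟨hyF, rfl⟩ := Finset.mem_filter.1 hy
  obtain ⟨hyF, hys⟩ := Finset.mem_filter.1 hyF
  exact Finset.mem_filter.2 ⟨hyF, (mem_sphPiece_of_mem_sph hys).2⟩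

lemma sum_wsum_inter_sph_le_sum_min {p q : ℝ} (hpq : p.HolderConjugate q) (hk : 2 ≤ k)
    (w : V k → ℝ≥0∞) (E F : Finset (V k)) (r : ℕ) :
    ∑ x ∈ E, wsum w (↑F ∩ sph x r) ≤
      ∑ a ∈ Finset.range (r + 1), min ((k : ℝ≥0∞) ^ a * wsum w ↑F)
        (2 ^ (1 / p) * (k : ℝ≥0∞) ^ ((r : ℝ) - a / q) * ∑ x ∈ E, MsSph p w x) := by
  calc ∑ x ∈ E, wsum w (↑F ∩ sph x r)
      ≤ ∑ a ∈ Finset.range (r + 1), ∑ x ∈ E, ∑ y ∈ F with y ∈ sphPiece x a (r - a), w y :=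
        (Finset.sum_le_sum fun x _ => wsum_inter_sph_le w F x r).trans_eq Finset.sum_comm
    _ ≤ _ := by
        refine Finset.sum_le_sum fun a ha => le_min (sum_sum_sphPiece_le w E F a (r - a)) ?_
        rw [Finset.mul_sum]
        have hab : a + (r - a) = r := Nat.add_sub_cancel' (Finset.mem_range_succ_iff.1 ha)
        exact Finset.sum_le_sum fun x _ => sum_sphPiece_le_MsSph hpq hk w x F hab

end KaryTree

/-- Key combinatorial lemma: for finite `E, F ⊆ T_k`, `s > 1`, `s' = s/(s-1)`,
`Σ_{x∈E} w(F ∩ S(x,r)) ≤ c_s k^{r s'/(s'+1)} w(F)^{1/(s'+1)} (M_s°w(E))^{s'/(s'+1)}`,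
with `c_s` depending only on `s`. -/
theorem stmt4 (s : ℝ) (hs : 1 < s) :
    ∃ c : ℝ≥0, ∀ (k : ℕ), 2 ≤ k → ∀ (w : V k → ℝ≥0∞) (E F : Finset (V k)) (r : ℕ),
      ∑ x ∈ E, wsum w (↑F ∩ sph x r) ≤
        (c : ℝ≥0∞) * (k : ℝ≥0∞) ^ ((r : ℝ) * ((s / (s - 1)) / (s / (s - 1) + 1))) *
          (wsum w ↑F) ^ ((1 : ℝ) / (s / (s - 1) + 1)) *
          (∑ x ∈ E, MsSph s w x) ^ ((s / (s - 1)) / (s / (s - 1) + 1)) := by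
  have hpq : s.HolderConjugate (s / (s - 1)) := Real.HolderConjugate.conjExponent hs
  have hq : 0 < s / (s - 1) := hpq.symm.pos
  have hgeom : ∀ ρ : ℝ≥0∞, ρ < 1 → (1 - ρ)⁻¹ ≠ ⊤ := fun ρ hρ =>
    ENNReal.inv_ne_top.2 (tsub_pos_of_lt hρ).ne'
  set C : ℝ≥0∞ := ((1 - 2⁻¹)⁻¹ + (1 - 2 ^ (-(1 / (s / (s - 1)))))⁻¹) *
    (2 ^ (1 / s)) ^ (s / (s - 1) / (s / (s - 1) + 1))
  have hC : C ≠ ⊤ := ENNReal.mul_ne_top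
    (ENNReal.add_ne_top.2 ⟨hgeom _ (ENNReal.inv_lt_one.2 ENNReal.one_lt_two),
      hgeom _ (ENNReal.rpow_lt_one_of_one_lt_of_neg ENNReal.one_lt_two
        (neg_lt_zero.2 (one_div_pos.2 hq)))⟩)
    (ENNReal.rpow_ne_top_of_nonneg (by positivity) (ENNReal.rpow_ne_top_of_nonneg (by positivity)
      ENNReal.ofNat_ne_top))
  refine ⟨C.toNNReal, fun k hk w E F r => ?_⟩
  rw [ENNReal.coe_toNNReal hC]
  refine (sum_wsum_inter_sph_le_sum_min hpq hk w E F r).trans ?_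
  refine (sum_min_pow_mul_le (by exact_mod_cast hk) (ENNReal.natCast_ne_top k) hq
    _ _ _ _ _).trans_eq ?_
  ring
end
end

section
/- On the infinite rooted k-ary tree with k ≥ 2, the radial weight w_β(x) = Σ_{j≥0} k^{jβ} χ_{T^j}(x) satisfies Mw_β ≃ w_β if and only if β ∈ [−1, 0]. -/
open scoped ENNReal NNReal BigOperators

noncomputable section

/-- The radial weight `w_β(x) = k^{β · depth x}`, i.e. `w_β = Σ_j k^{jβ} χ_{T^j}`. -/
def wrad (k : ℕ) (β : ℝ) : V k → ℝ≥0∞ := fun x => (k : ℝ≥0∞) ^ ((x.length : ℝ) * β)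

/-!
For `β ∈ [-1, 0]`, a vertex reached from `x` by going up `i` levels and then down `m` levels
has weight at most `k^(i - m) w_β(x)` (truncated subtraction), and there are at most `k^m` such
vertices; summing over `i + m ≤ r` gives `w_β(B(x, r)) ≤ 8 k^r w_β(x)`, while `|B(x, r)| ≥ k^r`.
Hence `w_β ≤ M w_β ≤ 8 w_β`, the lower bound coming from the radius `0`.

Conversely, `|B(x, r)| ≤ 8 k^r` (the case `β = 0`). The `k^r` vertices at depth `r` make
`M w_β(root) ≥ k^(rβ) / 8`, which is bounded only if `β ≤ 0`; and at a vertex `x` of depth `n`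
the ball of radius `n` contains the root, so `M w_β(x) ≥ k^(-n) / 8` against `w_β(x) = k^(nβ)`,
which forces `β ≥ -1`.
-/

namespace KaryTree

open Finset

variable {k : ℕ}

theorem lcpLen_le_length_left : ∀ x y : V k, lcpLen x y ≤ x.length
  | [], _ | _ :: _, [] => by simp [lcpLen]
  | a :: as, b :: bs => by
    rw [lcpLen]
    split
    · simpa using lcpLen_le_length_left as bs
    · simp

theorem lcpLen_le_length_right : ∀ x y : V k, lcpLen x y ≤ y.length
  | [], _ | _ :: _, [] => by simp [lcpLen]
  | a :: as, b :: bs => by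
    rw [lcpLen]
    split
    · simpa using lcpLen_le_length_right as bs
    · simp

theorem take_lcpLen_eq : ∀ x y : V k, x.take (lcpLen x y) = y.take (lcpLen x y)
  | [], _ | _ :: _, [] => by simp [lcpLen]
  | a :: as, b :: bs => by
    rw [lcpLen]
    split
    · next h => simp [h, take_lcpLen_eq as bs]
    · simp

theorem lcpLen_append_right : ∀ x t : V k, lcpLen x (x ++ t) = x.length
  | [], t => by cases t <;> simp [lcpLen]
  | a :: as, t => by simp [lcpLen, lcpLen_append_right as t]

theorem tdist_append_right (x t : V k) : tdist x (x ++ t) = t.length := by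
  simp [tdist, lcpLen_append_right]

theorem mem_ball_self (x : V k) (r : ℕ) : x ∈ ball x r := by
  simpa [ball] using (tdist_append_right x []).trans_le r.zero_le

theorem tdist_nil_right (x : V k) : tdist x [] = x.length := by
  cases x <;> simp [tdist, lcpLen]

variable (k) in
def words (m : ℕ) : Finset (V k) := (Finset.univ : Finset (Fin m → Fin k)).image List.ofFn

theorem mem_words {m : ℕ} {t : V k} : t ∈ words k m ↔ t.length = m := by
  refine ⟨?_, fun h => ?_⟩
  · simp only [words, Finset.mem_image, Finset.mem_univ, true_and]
    rintro ⟨f, rfl⟩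
    simp
  · subst h
    exact Finset.mem_image.mpr ⟨t.get, Finset.mem_univ _, List.ofFn_get t⟩

theorem card_words (m : ℕ) : (words k m).card = k ^ m := by
  rw [words, Finset.card_image_of_injective _ List.ofFn_injective]
  simp

/-- `y ∈ ball x r` is reached from `x` by going up `p.1` levels and then down `p.2` levels,
where `p.1 + p.2 = tdist x y`. -/
theorem ball_subset_biUnion (x : V k) (r : ℕ) :
    ball x r ⊆ ⋃ s ∈ range (r + 1), ⋃ p ∈ antidiagonal s,
      (x.take (x.length - p.1) ++ ·) '' ↑(words k p.2) := by
  intro y hy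
  have hx := lcpLen_le_length_left x y
  have hy' := lcpLen_le_length_right x y
  have hr : tdist x y ≤ r := hy
  simp only [Set.mem_iUnion, Set.mem_image, Finset.mem_coe, Finset.mem_range,
    HasAntidiagonal.mem_antidiagonal, mem_words, exists_prop]
  refine ⟨tdist x y, by omega, (x.length - lcpLen x y, y.length - lcpLen x y), rfl,
    y.drop (lcpLen x y), by simp, ?_⟩
  rw [Nat.sub_sub_self hx, take_lcpLen_eq, List.take_append_drop]

theorem finite_ball (x : V k) (r : ℕ) : (ball x r).Finite :=
  ((Finset.finite_toSet _).biUnion fun _ _ => (Finset.finite_toSet _).biUnion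
    fun _ _ => (Finset.finite_toSet _).image _).subset (ball_subset_biUnion x r)

theorem ball_zero (x : V k) : ball x 0 = {x} := by
  refine Set.Subset.antisymm ?_ (Set.singleton_subset_iff.mpr (mem_ball_self x 0))
  refine (ball_subset_biUnion x 0).trans ?_
  simp [words]

theorem wsum_ball_le (f : V k → ℝ≥0∞) (x : V k) (r : ℕ) :
    wsum f (ball x r) ≤ ∑ s ∈ range (r + 1), ∑ p ∈ antidiagonal s,
      ∑ t ∈ words k p.2, f (x.take (x.length - p.1) ++ t) := by
  refine (ENNReal.tsum_mono_subtype f (ball_subset_biUnion x r)).trans <|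
    (ENNReal.tsum_biUnion_le _ _ _).trans <| Finset.sum_le_sum fun s _ =>
      (ENNReal.tsum_biUnion_le _ _ _).trans <| Finset.sum_le_sum fun p _ => ?_
  rw [tsum_image _ (List.append_right_injective _).injOn]
  exact (Finset.tsum_subtype (words k p.2) fun t => f (x.take (x.length - p.1) ++ t)).le

theorem sum_words_le_wsum_ball (f : V k → ℝ≥0∞) (x : V k) (r : ℕ) :
    ∑ t ∈ words k r, f (x ++ t) ≤ wsum f (ball x r) := by
  classical
  have hsub : ↑((words k r).image (x ++ ·)) ⊆ ball x r := by
    intro y hy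
    obtain ⟨t, ht, rfl⟩ := Finset.mem_image.mp hy
    simp [ball, tdist_append_right, (mem_words.mp ht)]
  rw [← Finset.sum_image (List.append_right_injective x).injOn, ← Finset.tsum_subtype]
  exact ENNReal.tsum_mono_subtype f hsub

theorem sum_range_pow_le (hk : 2 ≤ k) (s : ℕ) : ∑ i ∈ range (s + 1), k ^ i ≤ 2 * k ^ s := by
  induction s with
  | zero => simp
  | succ s ih =>
    rw [sum_range_succ, pow_succ]
    nlinarith [Nat.mul_le_mul_left (k ^ s) hk]

theorem sum_antidiagonal_pow_max_le (hk : 2 ≤ k) (s : ℕ) :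
    ∑ p ∈ antidiagonal s, k ^ max p.1 p.2 ≤ 4 * k ^ s :=
  calc ∑ p ∈ antidiagonal s, k ^ max p.1 p.2
      ≤ ∑ p ∈ antidiagonal s, (k ^ p.1 + k ^ p.2) :=
        sum_le_sum fun p _ => by rcases max_choice p.1 p.2 with h | h <;> rw [h] <;> omega
    _ = 2 * ∑ i ∈ range (s + 1), k ^ i := by
        have hfst : ∑ p ∈ antidiagonal s, k ^ p.1 = ∑ i ∈ range (s + 1), k ^ i :=
          Nat.sum_antidiagonal_eq_sum_range_succ (fun i _ => k ^ i) s
        have hsnd : ∑ p ∈ antidiagonal s, k ^ p.2 = ∑ p ∈ antidiagonal s, k ^ p.1 := by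
          rw [← Nat.sum_antidiagonal_swap]
          rfl
        rw [sum_add_distrib, hsnd, hfst, two_mul]
    _ ≤ 4 * k ^ s := by linarith [sum_range_pow_le hk s]

theorem sum_range_antidiagonal_pow_max_le (hk : 2 ≤ k) (r : ℕ) :
    ∑ s ∈ range (r + 1), ∑ p ∈ antidiagonal s, k ^ max p.1 p.2 ≤ 8 * k ^ r :=
  calc _ ≤ ∑ s ∈ range (r + 1), 4 * k ^ s := sum_le_sum fun s _ => sum_antidiagonal_pow_max_le hk s
    _ ≤ 8 * k ^ r := by rw [← mul_sum]; linarith [sum_range_pow_le hk r]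

variable {β : ℝ}

theorem wrad_zero : wrad k 0 = 1 := by
  funext x
  simp [wrad]

theorem wrad_le_pow_mul (hk : 1 ≤ k) (hβ1 : -1 ≤ β) (hβ0 : β ≤ 0) {x y : V k} {d : ℕ}
    (h : x.length ≤ y.length + d) : wrad k β y ≤ (k : ℝ≥0∞) ^ d * wrad k β x := by
  have hlen : (x.length : ℝ) ≤ y.length + d := by exact_mod_cast h
  have hexp : (y.length : ℝ) * β ≤ d + x.length * β := by
    rcases le_total (x.length : ℝ) y.length with hxy | hxy <;> nlinarith
  have hk0 : (k : ℝ≥0∞) ≠ 0 := by simp; omega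
  calc wrad k β y ≤ (k : ℝ≥0∞) ^ ((d : ℝ) + x.length * β) :=
        ENNReal.rpow_le_rpow_of_exponent_le (by exact_mod_cast hk) hexp
    _ = (k : ℝ≥0∞) ^ d * wrad k β x := by
        rw [ENNReal.rpow_add _ _ hk0 (ENNReal.natCast_ne_top k), ENNReal.rpow_natCast, wrad]

theorem wsum_wrad_ball_le (hk : 2 ≤ k) (hβ1 : -1 ≤ β) (hβ0 : β ≤ 0) (x : V k) (r : ℕ) :
    wsum (wrad k β) (ball x r) ≤ 8 * (k : ℝ≥0∞) ^ r * wrad k β x :=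
  calc wsum (wrad k β) (ball x r)
      ≤ ∑ s ∈ range (r + 1), ∑ p ∈ antidiagonal s, ∑ t ∈ words k p.2,
          wrad k β (x.take (x.length - p.1) ++ t) := wsum_ball_le _ x r
    _ ≤ ∑ s ∈ range (r + 1), ∑ p ∈ antidiagonal s, ∑ t ∈ words k p.2,
          (k : ℝ≥0∞) ^ (p.1 - p.2) * wrad k β x := by
        gcongr with s _ p _ t ht
        refine wrad_le_pow_mul (by omega) hβ1 hβ0 ?_
        simp only [List.length_append, List.length_take, mem_words.mp ht]
        omega
    _ = (((∑ s ∈ range (r + 1), ∑ p ∈ antidiagonal s, k ^ max p.1 p.2 : ℕ)) : ℝ≥0∞) *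
          wrad k β x := by
        simp only [sum_const, card_words, nsmul_eq_mul, Nat.cast_sum, sum_mul, Nat.cast_pow]
        refine sum_congr rfl fun s _ => sum_congr rfl fun p _ => ?_
        rw [← mul_assoc, ← pow_add, show p.2 + (p.1 - p.2) = max p.1 p.2 by omega]
    _ ≤ ((8 * k ^ r : ℕ) : ℝ≥0∞) * wrad k β x := by
        gcongr
        exact sum_range_antidiagonal_pow_max_le hk r
    _ = 8 * (k : ℝ≥0∞) ^ r * wrad k β x := by push_cast; rfl

theorem ballCard_eq_wsum_one (x : V k) (r : ℕ) : ballCard x r = wsum 1 (ball x r) := by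
  rw [ballCard, wsum, Pi.one_def, ENNReal.tsum_set_one, ← (finite_ball x r).cast_ncard_eq]
  rfl

theorem ballCard_le (hk : 2 ≤ k) (x : V k) (r : ℕ) : ballCard x r ≤ 8 * (k : ℝ≥0∞) ^ r := by
  simpa [wrad_zero, ← ballCard_eq_wsum_one] using
    wsum_wrad_ball_le hk (β := 0) (by norm_num) le_rfl x r

theorem pow_le_ballCard (x : V k) (r : ℕ) : (k : ℝ≥0∞) ^ r ≤ ballCard x r := by
  simpa [ballCard_eq_wsum_one, card_words] using sum_words_le_wsum_ball 1 x r

theorem ballCard_ne_zero (x : V k) (r : ℕ) : ballCard x r ≠ 0 := by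
  simpa [ballCard] using ((Set.ncard_pos (finite_ball x r)).mpr ⟨x, mem_ball_self x r⟩).ne'

theorem wsum_ball_le_ballCard_mul_Mball (f : V k → ℝ≥0∞) (x : V k) (r : ℕ) :
    wsum f (ball x r) ≤ ballCard x r * Mball f x :=
  calc wsum f (ball x r) = ballCard x r * (wsum f (ball x r) / ballCard x r) :=
        (ENNReal.mul_div_cancel (ballCard_ne_zero x r) (ENNReal.natCast_ne_top _)).symm
    _ ≤ ballCard x r * Mball f x := by
        gcongr
        exact le_iSup (fun r => wsum f (ball x r) / ballCard x r) r

theorem le_Mball (f : V k → ℝ≥0∞) (x : V k) : f x ≤ Mball f x :=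
  calc f x = wsum f (ball x 0) / ballCard x 0 := by
        rw [wsum, _root_.tsum_subtype, ballCard, ball_zero]
        simp
    _ ≤ Mball f x := le_iSup (fun r => wsum f (ball x r) / ballCard x r) 0

theorem Mball_wrad_le (hk : 2 ≤ k) (hβ1 : -1 ≤ β) (hβ0 : β ≤ 0) (x : V k) :
    Mball (wrad k β) x ≤ 8 * wrad k β x :=
  iSup_le fun r => ENNReal.div_le_of_le_mul <|
    calc wsum (wrad k β) (ball x r) ≤ 8 * (k : ℝ≥0∞) ^ r * wrad k β x :=
          wsum_wrad_ball_le hk hβ1 hβ0 x r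
      _ = 8 * wrad k β x * (k : ℝ≥0∞) ^ r := by ring
      _ ≤ 8 * wrad k β x * ballCard x r := by gcongr; exact pow_le_ballCard x r

theorem nonpos_of_forall_rpow_le {b : ℝ≥0∞} (hb : 1 < b) {a : ℝ} {M : ℝ≥0∞} (hM : M ≠ ⊤)
    (h : ∀ n : ℕ, b ^ ((n : ℝ) * a) ≤ M) : a ≤ 0 := by
  by_contra! ha
  have hlim := ENNReal.tendsto_pow_atTop_nhds_top_iff.mpr (ENNReal.one_lt_rpow hb ha)
  obtain ⟨n, hn⟩ := (hlim.eventually (lt_mem_nhds hM.lt_top)).exists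
  refine (h n).not_gt ?_
  rwa [mul_comm, ENNReal.rpow_mul, ENNReal.rpow_natCast]

theorem nonpos_of_Mball_wrad_root_le (hk : 2 ≤ k) {C : ℝ≥0∞} (hC : C ≠ ⊤)
    (H : Mball (wrad k β) [] ≤ C) : β ≤ 0 := by
  refine nonpos_of_forall_rpow_le (b := k) (by exact_mod_cast hk) (M := 8 * C)
    (by finiteness) fun r => ?_
  have hkr : (k : ℝ≥0∞) ^ r ≠ 0 := pow_ne_zero _ (by simp; omega)
  refine (ENNReal.mul_le_mul_iff_right hkr (by finiteness)).mp ?_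
  calc (k : ℝ≥0∞) ^ r * (k : ℝ≥0∞) ^ ((r : ℝ) * β)
      = ∑ t ∈ words k r, wrad k β ([] ++ t) := by
        rw [sum_congr rfl fun t ht => by rw [List.nil_append, wrad, mem_words.mp ht], sum_const,
          card_words, nsmul_eq_mul, Nat.cast_pow]
    _ ≤ ballCard [] r * Mball (wrad k β) [] :=
        (sum_words_le_wsum_ball _ [] r).trans (wsum_ball_le_ballCard_mul_Mball _ [] r)
    _ ≤ 8 * (k : ℝ≥0∞) ^ r * C := by gcongr; exact ballCard_le hk [] r
    _ = (k : ℝ≥0∞) ^ r * (8 * C) := by ring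

theorem neg_one_le_of_Mball_wrad_le (hk : 2 ≤ k) {C : ℝ≥0∞} (hC : C ≠ ⊤)
    (H : ∀ x, Mball (wrad k β) x ≤ C * wrad k β x) : -1 ≤ β := by
  suffices -(1 + β) ≤ 0 by linarith
  refine nonpos_of_forall_rpow_le (b := k) (by exact_mod_cast hk) (M := 8 * C)
    (by finiteness) fun n => ?_
  have hk0 : (k : ℝ≥0∞) ≠ 0 := by simp; omega
  set x : V k := List.replicate n ⟨0, by omega⟩
  have hroot : ([] : V k) ∈ ball x n := by simp [ball, tdist_nil_right, x]
  have hgrowth : (k : ℝ≥0∞) ^ ((n : ℝ) * -(1 + β)) = ((k : ℝ≥0∞) ^ n * wrad k β x)⁻¹ := by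
    rw [wrad, List.length_replicate, ← ENNReal.rpow_natCast, ← ENNReal.rpow_add _ _ hk0
      (ENNReal.natCast_ne_top k), ← ENNReal.rpow_neg]
    ring_nf
  have hwx : (k : ℝ≥0∞) ^ n * wrad k β x ≠ ⊤ :=
    ENNReal.mul_ne_top (by finiteness) (ENNReal.rpow_ne_top_of_ne_zero hk0 (by finiteness))
  rw [hgrowth, ENNReal.inv_le_iff_le_mul (fun h => absurd h (by finiteness))
    (fun h => absurd h hwx)]
  calc 1 = wrad k β [] := by simp [wrad]
    _ ≤ wsum (wrad k β) (ball x n) := ENNReal.le_tsum (⟨[], hroot⟩ : ball x n)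
    _ ≤ ballCard x n * Mball (wrad k β) x := wsum_ball_le_ballCard_mul_Mball _ x n
    _ ≤ 8 * (k : ℝ≥0∞) ^ n * (C * wrad k β x) := by gcongr; exacts [ballCard_le hk x n, H x]
    _ = (k : ℝ≥0∞) ^ n * wrad k β x * (8 * C) := by ring

end KaryTree

/-- On the infinite rooted `k`-ary tree (`k ≥ 2`), `M w_β ≃ w_β` iff `β ∈ [-1,0]`. -/
theorem stmt11 (k : ℕ) (hk : 2 ≤ k) (β : ℝ) :
    (∃ c C : ℝ≥0, 0 < c ∧ ∀ x : V k,
        (c : ℝ≥0∞) * wrad k β x ≤ Mball (wrad k β) x ∧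
        Mball (wrad k β) x ≤ (C : ℝ≥0∞) * wrad k β x) ↔
      β ∈ Set.Icc (-1 : ℝ) 0 := by
  constructor
  · rintro ⟨c, C, -, H⟩
    have hup : ∀ x, Mball (wrad k β) x ≤ C * wrad k β x := fun x => (H x).2
    refine ⟨KaryTree.neg_one_le_of_Mball_wrad_le hk ENNReal.coe_ne_top hup,
      KaryTree.nonpos_of_Mball_wrad_root_le hk (C := C) ENNReal.coe_ne_top ?_⟩
    simpa [wrad] using hup []
  · rintro ⟨hβ1, hβ0⟩
    refine ⟨1, 8, one_pos, fun x => ⟨?_, ?_⟩⟩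
    · simpa using KaryTree.le_Mball (wrad k β) x
    · simpa using KaryTree.Mball_wrad_le hk hβ1 hβ0 x
end
end

section
/- Let T be the infinite rooted k-ary tree with k ≥ 2 and w a weight. If the weighted weak-type (1,1) estimate w({x : M°f(x) > λ}) ≤ c_w (1/λ) Σ_{x∈T} |f(x)| w(x) holds for all f and λ > 0, then M°w(x) ≲ w(x) for all x ∈ T (equivalently, Mw ≲ w). -/
open scoped ENNReal NNReal BigOperators

noncomputable section

/-!
Cutting off the common prefix with the centre embeds the sphere `S(y, r)` into the words of
length at most `r`, so `|S(y, r)| < 2 k^r` for `k ≥ 2`, while `x ++ s` with `|s| = r` gives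
`|S(x, r)| ≥ k^r`. If `y ∈ S(x, r)` then `x ∈ S(y, r)`, hence `M°δ_x(y) ≥ |S(y, r)|⁻¹ > (2 k^r)⁻¹`
on all of `S(x, r)`. The weak type inequality for `δ_x` at height `(2 k^r)⁻¹` then gives
`w(S(x, r)) ≤ 2 k^r c_w w(x)`, and dividing by `|S(x, r)| ≥ k^r` gives `A_r° w(x) ≤ 2 c_w w(x)`.
-/

section Tree

variable {k : ℕ}

lemma lcpLen_le_left : ∀ a b : List (Fin k), lcpLen a b ≤ a.length
  | [], _ | _ :: _, [] => by simp [lcpLen]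
  | a :: as, b :: bs => by
      simp only [lcpLen]
      split
      · simpa using lcpLen_le_left as bs
      · simp

lemma lcpLen_comm : ∀ a b : List (Fin k), lcpLen a b = lcpLen b a
  | [], [] | [], _ :: _ | _ :: _, [] => rfl
  | a :: as, b :: bs => by
      rcases eq_or_ne a b with rfl | h
      · simp [lcpLen, lcpLen_comm as bs]
      · simp [lcpLen, h, h.symm]

lemma lcpLen_le_right (a b : List (Fin k)) : lcpLen a b ≤ b.length :=
  lcpLen_comm a b ▸ lcpLen_le_left b a

lemma take_lcpLen_eq_s13 : ∀ a b : List (Fin k), a.take (lcpLen a b) = b.take (lcpLen a b)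
  | [], _ | _ :: _, [] => by simp [lcpLen]
  | a :: as, b :: bs => by
      rcases eq_or_ne a b with rfl | h
      · simp [lcpLen, take_lcpLen_eq_s13 as bs]
      · simp [lcpLen, h]

lemma lcpLen_self_append : ∀ a b : List (Fin k), lcpLen a (a ++ b) = a.length
  | [], b => by cases b <;> simp [lcpLen]
  | a :: as, b => by simp [lcpLen, lcpLen_self_append as b]

lemma tdist_comm (x y : V k) : tdist x y = tdist y x := by
  unfold tdist; rw [lcpLen_comm]; omega

lemma tdist_self_append (x s : V k) : tdist x (x ++ s) = s.length := by
  simp [tdist, lcpLen_self_append]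

lemma ncard_length_eq (r : ℕ) : {l : List (Fin k) | l.length = r}.ncard = k ^ r := by
  change Nat.card (List.Vector (Fin k) r) = k ^ r
  simp

lemma ncard_length_le (r : ℕ) :
    {l : List (Fin k) | l.length ≤ r}.ncard ≤ ∑ j ∈ Finset.range (r + 1), k ^ j := by
  have hunion : {l : List (Fin k) | l.length ≤ r} =
      ⋃ j ∈ Finset.range (r + 1), {l | l.length = j} := by
    ext l; simp
  rw [hunion]
  exact (Finset.set_ncard_biUnion_le _ _).trans_eq (by simp [ncard_length_eq])

lemma mapsTo_drop_lcpLen_sph (y : V k) (r : ℕ) :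
    Set.MapsTo (fun z => z.drop (lcpLen y z)) (sph y r) {l | l.length ≤ r} := by
  intro z (hz : tdist y z = r)
  have := lcpLen_le_left y z
  simp only [tdist] at hz
  show (z.drop _).length ≤ r
  rw [List.length_drop]
  omega

lemma injOn_drop_lcpLen_sph (y : V k) (r : ℕ) :
    Set.InjOn (fun z => z.drop (lcpLen y z)) (sph y r) := by
  intro z₁ (h₁ : tdist y z₁ = r) z₂ (h₂ : tdist y z₂ = r) heq
  simp only [tdist] at h₁ h₂ heq
  have := lcpLen_le_left y z₁
  have := lcpLen_le_right y z₁
  have := lcpLen_le_left y z₂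
  have := lcpLen_le_right y z₂
  have hlen := congrArg List.length heq
  simp only [List.length_drop] at hlen
  have hlcp : lcpLen y z₁ = lcpLen y z₂ := by omega
  rw [← List.take_append_drop (lcpLen y z₁) z₁, ← List.take_append_drop (lcpLen y z₂) z₂,
    ← take_lcpLen_eq_s13, ← take_lcpLen_eq_s13, heq, hlcp]

lemma finite_sph (y : V k) (r : ℕ) : (sph y r).Finite :=
  .of_injOn (mapsTo_drop_lcpLen_sph y r) (injOn_drop_lcpLen_sph y r)
    (List.finite_length_le _ r)

lemma ncard_sph_lt (hk : 2 ≤ k) (y : V k) (r : ℕ) : (sph y r).ncard < 2 * k ^ r :=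
  calc (sph y r).ncard
      ≤ {l : List (Fin k) | l.length ≤ r}.ncard :=
        Set.ncard_le_ncard_of_injOn _ (mapsTo_drop_lcpLen_sph y r) (injOn_drop_lcpLen_sph y r)
          (List.finite_length_le _ r)
    _ ≤ ∑ j ∈ Finset.range r, k ^ j + k ^ r := by
        rw [← Finset.sum_range_succ]; exact ncard_length_le r
    _ < 2 * k ^ r := by
        have := Nat.geomSum_lt hk (s := Finset.range r) (fun _ => Finset.mem_range.1)
        omega

lemma pow_le_ncard_sph (x : V k) (r : ℕ) : k ^ r ≤ (sph x r).ncard := by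
  have hsub : (x ++ ·) '' {l | l.length = r} ⊆ sph x r := by
    rintro _ ⟨s, rfl, rfl⟩
    exact tdist_self_append x s
  calc k ^ r = ((x ++ ·) '' {l : List (Fin k) | l.length = r}).ncard := by
        rw [Set.ncard_image_of_injective _ (List.append_right_injective x), ncard_length_eq]
    _ ≤ (sph x r).ncard := Set.ncard_le_ncard hsub (finite_sph x r)

end Tree

section WeightedSums

variable {k : ℕ}

lemma wsum_mono (w : V k → ℝ≥0∞) {A B : Set (V k)} (h : A ⊆ B) : wsum w A ≤ wsum w B :=
  ENNReal.tsum_mono_subtype w h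

lemma wsum_single {x : V k} {A : Set (V k)} (hx : x ∈ A) (c : ℝ≥0∞) :
    wsum (Pi.single x c) A = c := by
  rw [wsum, tsum_eq_single ⟨x, hx⟩ fun y hy => by simp [Subtype.coe_ne_coe.2 hy]]
  simp

lemma absE_single (x : V k) : absE (Pi.single x (1 : ℝ)) = Pi.single x 1 := by
  funext y
  by_cases h : y = x <;> simp [absE, h]

lemma tsum_single_mul (x : V k) (c : ℝ≥0∞) (w : V k → ℝ≥0∞) :
    ∑' y, (Pi.single x c : V k → ℝ≥0∞) y * w y = c * w x := by
  rw [tsum_eq_single x fun y hy => by simp [hy]]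
  simp

lemma inv_sphCard_le_Msph_single {x y : V k} {r : ℕ} (hx : x ∈ sph y r) :
    (sphCard y r)⁻¹ ≤ Msph (Pi.single x 1) y :=
  le_iSup_of_le r (by rw [sphAvg, wsum_single hx, one_div])

lemma sph_subset_Msph_single_gt (hk : 2 ≤ k) (x : V k) (r : ℕ) :
    sph x r ⊆ {y | ((2 * k ^ r : ℕ) : ℝ≥0∞)⁻¹ < Msph (Pi.single x 1) y} := by
  intro y (hy : tdist x y = r)
  refine lt_of_lt_of_le ?_ (inv_sphCard_le_Msph_single ((tdist_comm y x).trans hy))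
  rw [ENNReal.inv_lt_inv, sphCard]
  exact_mod_cast ncard_sph_lt hk y r

end WeightedSums

lemma wsum_sph_le_of_weakType {k : ℕ} (hk : 2 ≤ k) {w : V k → ℝ≥0∞} {cw : ℝ≥0}
    (hw : ∀ (f : V k → ℝ) (lam : ℝ), 0 < lam →
      wsum w {x : V k | ENNReal.ofReal lam < Msph (absE f) x} ≤
        (cw : ℝ≥0∞) * (ENNReal.ofReal lam)⁻¹ *
          ∑' x : V k, ENNReal.ofReal |f x| * w x)
    (x : V k) (r : ℕ) :
    wsum w (sph x r) ≤ cw * (2 * k ^ r : ℕ) * w x := by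
  have hpos : (0 : ℝ) < (2 * k ^ r : ℕ) := by
    have : 0 < k := by omega
    positivity
  have hlam : ENNReal.ofReal ((2 * k ^ r : ℕ) : ℝ)⁻¹ = ((2 * k ^ r : ℕ) : ℝ≥0∞)⁻¹ := by
    rw [ENNReal.ofReal_inv_of_pos hpos, ENNReal.ofReal_natCast]
  calc wsum w (sph x r)
      ≤ wsum w {y | ENNReal.ofReal ((2 * k ^ r : ℕ) : ℝ)⁻¹ < Msph (absE (Pi.single x 1)) y} := by
        rw [hlam, absE_single]
        exact wsum_mono w (sph_subset_Msph_single_gt hk x r)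
    _ ≤ cw * (ENNReal.ofReal ((2 * k ^ r : ℕ) : ℝ)⁻¹)⁻¹ *
          ∑' y, ENNReal.ofReal |(Pi.single x 1 : V k → ℝ) y| * w y :=
        hw _ _ (inv_pos.2 hpos)
    _ = cw * (2 * k ^ r : ℕ) * ∑' y, absE (Pi.single x 1) y * w y := by
        rw [hlam, inv_inv]; rfl
    _ = cw * (2 * k ^ r : ℕ) * w x := by
        rw [absE_single, tsum_single_mul, one_mul]

/-- Necessity: if the weighted weak type (1,1) estimate for `M°` holds for `w`,
then `M°w ≲ w` pointwise. -/
theorem stmt13 (k : ℕ) (hk : 2 ≤ k) (w : V k → ℝ≥0∞) (cw : ℝ≥0)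
    (hw : ∀ (f : V k → ℝ) (lam : ℝ), 0 < lam →
      wsum w {x : V k | ENNReal.ofReal lam < Msph (absE f) x} ≤
        (cw : ℝ≥0∞) * (ENNReal.ofReal lam)⁻¹ *
          ∑' x : V k, ENNReal.ofReal |f x| * w x) :
    ∃ C : ℝ≥0, ∀ x : V k, Msph w x ≤ (C : ℝ≥0∞) * w x := by
  refine ⟨2 * cw, fun x => iSup_le fun r => ?_⟩
  have hcard : ((k ^ r : ℕ) : ℝ≥0∞) ≤ sphCard x r := by
    rw [sphCard]; exact_mod_cast pow_le_ncard_sph x r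
  calc sphAvg w x r ≤ wsum w (sph x r) / (k ^ r : ℕ) := ENNReal.div_le_div_left hcard _
    _ ≤ (2 * cw : ℝ≥0) * w x := by
        refine ENNReal.div_le_of_le_mul ?_
        calc wsum w (sph x r) ≤ cw * (2 * k ^ r : ℕ) * w x := wsum_sph_le_of_weakType hk hw x r
          _ = (2 * cw : ℝ≥0) * w x * (k ^ r : ℕ) := by push_cast; ring
end
end
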